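/- If N is a symmetrel mould (N^{w'⧢w''} = N^{w'}N^{w''} for all words, extending N linearly), then the diamond composition coincides with mould composition: M⋄N = M∘N for every mould M. -/

import Mathlib

/-- The quasi-shuffle product of two words over a commutative semigroup `Ω`. -/
noncomputable def qsh {Ω : Type*} [AddCommSemigroup Ω] :
    List Ω → List Ω → (List Ω →₀ ℤ)
  | [], w => Finsupp.single w 1
  | a :: w', [] => Finsupp.single (a :: w') 1
  | a :: w', b :: w'' =>
      Finsupp.mapDomain (a :: ·) (qsh w' (b :: w''))
    + Finsupp.mapDomain (b :: ·) (qsh (a :: w') w'')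
    + Finsupp.mapDomain ((a + b) :: ·) (qsh w' w'')
  termination_by w₁ w₂ => w₁.length + w₂.length

/-- Weight of a word (junk default value for the empty word). -/
def wt {Ω : Type*} [AddCommSemigroup Ω] [Inhabited Ω] : List Ω → Ω
  | [] => default
  | a :: l => l.foldl (· + ·) a

/-- Iterated quasi-shuffle `w¹ ⧢ ⋯ ⧢ wˢ` of a list of words. -/
noncomputable def qshFold {Ω : Type*} [AddCommSemigroup Ω] :
    List (List Ω) → (List Ω →₀ ℤ)
  | [] => Finsupp.single [] 1
  | u :: rest => (qshFold rest).sum fun v c => c • qsh u v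

/-- The linear extension of a mould `N` to formal `ℤ`-linear combinations of
words. -/
def mext {Ω A : Type*} [CommRing A] (N : List Ω → A) (x : List Ω →₀ ℤ) : A :=
  x.sum fun w c => c • N w

/-- Mould composition
`(M ∘ N)^w = ∑_{s≥1} ∑_{w=w¹.⋯.wˢ} M^{‖w¹‖⋯‖wˢ‖} N^{w¹} ⋯ N^{wˢ}`
(decompositions into nonempty words), with `(M ∘ N)^∅ = M^∅`. -/
noncomputable def mcomp {Ω A : Type*} [AddCommSemigroup Ω] [Inhabited Ω] [CommRing A]
    (M N : List Ω → A) : List Ω → A := fun w =>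
  if w.isEmpty then M [] else
  ∑ c : Composition w.length,
    M ((w.splitWrtComposition c).map wt) * ((w.splitWrtComposition c).map N).prod

/-- Diamond composition, obtained by dualizing the internal coproduct `Γ`:
`(M ⋄ N)^w = ∑_{s≥1} ∑_{w=w¹.⋯.wˢ} M^{‖w¹‖⋯‖wˢ‖} N^{w¹ ⧢ ⋯ ⧢ wˢ}`,
with `(M ⋄ N)^∅ = M^∅`. -/
noncomputable def mdiamond {Ω A : Type*} [AddCommSemigroup Ω] [Inhabited Ω] [CommRing A]
    (M N : List Ω → A) : List Ω → A := fun w =>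
  if w.isEmpty then M [] else
  ∑ c : Composition w.length,
    M ((w.splitWrtComposition c).map wt) *
      mext N (qshFold (w.splitWrtComposition c))

/-
A symmetrel mould turns the iterated quasi-shuffle `w¹ ⧢ ⋯ ⧢ wˢ` into the product
`N^{w¹} ⋯ N^{wˢ}`, up to a factor `N^∅` coming from the empty word at the base of the fold.
That factor is harmless because `N^u N^∅ = N^{u ⧢ ∅} = N^u`, so the two compositions agree
termwise on every decomposition of a nonempty word.
-/

lemma List.splitWrtComposition_ne_nil {α : Type*} {l : List α} (hl : l ≠ [])
    (c : Composition l.length) : l.splitWrtComposition c ≠ [] := by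
  rw [← List.length_pos_iff, List.length_splitWrtComposition]
  exact c.length_pos_of_pos (List.length_pos_iff.mpr hl)

section Mext

variable {Ω A : Type*} [CommRing A] {N : List Ω → A}

lemma mext_eq_linearCombination (N : List Ω → A) (x : List Ω →₀ ℤ) :
    mext N x = Finsupp.linearCombination ℤ N x := by
  simp [mext, Finsupp.linearCombination_apply]

lemma mext_single (N : List Ω → A) (w : List Ω) : mext N (Finsupp.single w 1) = N w := by
  simp [mext_eq_linearCombination]

variable [AddCommSemigroup Ω]

lemma qsh_nil_right (u : List Ω) : qsh u [] = Finsupp.single u 1 := by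
  cases u <;> simp [qsh]

lemma mul_nil_of_symmetrel (hN : ∀ u v : List Ω, mext N (qsh u v) = N u * N v)
    (u : List Ω) : N u * N [] = N u := by
  rw [← hN, qsh_nil_right, mext_single]

lemma mext_qshFold_cons {u : List Ω} (hN : ∀ v, mext N (qsh u v) = N u * N v)
    (L : List (List Ω)) : mext N (qshFold (u :: L)) = N u * mext N (qshFold L) := by
  simp only [qshFold, mext_eq_linearCombination, map_finsuppSum, map_zsmul,
    Finsupp.linearCombination_apply, Finsupp.mul_sum]
  refine Finsupp.sum_congr fun v _ => ?_
  change _ • mext N (qsh u v) = _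
  rw [hN v, mul_smul_comm]

lemma mext_qshFold (hN : ∀ u v : List Ω, mext N (qsh u v) = N u * N v)
    (L : List (List Ω)) : mext N (qshFold L) = N [] * (L.map N).prod := by
  induction L with
  | nil => simp [qshFold, mext_single]
  | cons u L ih => rw [mext_qshFold_cons (hN u), ih, List.map_cons, List.prod_cons]; ring

lemma mext_qshFold_of_ne_nil (hN : ∀ u v : List Ω, mext N (qsh u v) = N u * N v)
    {L : List (List Ω)} (hL : L ≠ []) : mext N (qshFold L) = (L.map N).prod := by
  obtain ⟨u, L, rfl⟩ := List.exists_cons_of_ne_nil hL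
  rw [mext_qshFold hN, List.map_cons, List.prod_cons, ← mul_assoc,
    mul_comm (N []), mul_nil_of_symmetrel hN]

end Mext

/-- if `N` is symmetrel, then the diamond composition coincides
with mould composition: `M ⋄ N = M ∘ N` for every mould `M`. -/
theorem mdiamond_eq_mcomp_of_symmetrel {Ω A : Type*} [AddCommSemigroup Ω]
    [Inhabited Ω] [CommRing A] (M N : List Ω → A)
    (hN : ∀ u v : List Ω, mext N (qsh u v) = N u * N v) :
    mdiamond M N = mcomp M N := by
  funext w
  unfold mdiamond mcomp
  split_ifs with hw
  · rfl
  · have hw_ne : w ≠ [] := fun h => hw (by simp [h])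
    refine Finset.sum_congr rfl fun c _ => ?_
    rw [mext_qshFold_of_ne_nil hN (List.splitWrtComposition_ne_nil hw_ne c)]
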